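/- Let c_i(n,k) be the number of signed permutations π ∈ B_n with exc_A(π) = k and neg(π) = i. Then c_i(n,k) = (n−k)·c_i(n−1,k−1) + (k+1)·c_i(n−1,k) + (n−k)·c_{i−1}(n−1,k) + (k+1)·c_{i−1}(n−1,k+1), where c_{−1}(n,k) = 0 and c_i(0,k) = 0. -/

import Mathlib

open Finset Polynomial

/-- The group of colored permutations `G_{r,n} = Z_r ≀ S_n`, realized as bijections of the
colored alphabet `Σ = [n] × {0,…,r-1}` commuting with the color shift. -/
def ColoredPerm (r n : ℕ) [NeZero r] : Type :=
  {π : Equiv.Perm (Fin n × Fin r) //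
    ∀ x : Fin n × Fin r, π (x.1, x.2 + 1) = ((π x).1, (π x).2 + 1)}

/-- The color order on the colored alphabet:
`1^[r-1] < ⋯ < n^[r-1] < ⋯ < 1^[0] < ⋯ < n^[0]` (higher color is smaller). -/
def colorLt {r n : ℕ} (x y : Fin n × Fin r) : Prop :=
  y.2 < x.2 ∨ (x.2 = y.2 ∧ x.1 < y.1)

/-- The excedance number `exc` of a colored permutation. -/
noncomputable def cExc {r n : ℕ} [NeZero r] (π : ColoredPerm r n) : ℕ :=
  Nat.card {x : Fin n × Fin r // colorLt x (π.1 x)}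

/-- `exc_A(π) = |{i ∈ [n-1] : π(i) > i}|` (positions are the color-0 letters,
and `i ∈ [n-1]` corresponds to `i.val + 1 < n`). -/
noncomputable def cExcA {r n : ℕ} [NeZero r] (π : ColoredPerm r n) : ℕ :=
  Nat.card {i : Fin n // i.val + 1 < n ∧ colorLt (i, 0) (π.1 (i, 0))}

/-- `csum(π)`: the sum of the colors appearing in the window notation of `π`. -/
def csum {r n : ℕ} [NeZero r] (π : ColoredPerm r n) : ℕ :=
  ∑ i : Fin n, (π.1 (i, 0)).2.val

/-- `c_i(n,k)`: the number of signed permutations `π ∈ B_n` with `exc_A(π) = k` and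
`neg(π) = i`.  Indices `i, k` range over `ℤ`, so that `c_{-1}(n,k) = 0` and the counts
vanish for negative indices. -/
noncomputable def cB (n : ℕ) (i k : ℤ) : ℕ :=
  Nat.card {π : ColoredPerm 2 n // (cExcA π : ℤ) = k ∧ (csum π : ℤ) = i}

/-
Write a signed permutation of `[m+1]` in window notation. Deleting the letter `m+1` (moving the
last letter into its place) is a bijection `B_{m+1} → B_m × [m+1] × {±}` recording the position
`j` and sign `ε` of `m+1`. The last position is never an excedance, the letter `m+1` at `j ≤ m`
is one iff it is positive, and an excedance at `j` is lost since its letter moves to the end; all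
other positions keep their status. So if `p ∈ B_m` has `e` excedances, the `2(m+1)` insertions
into `p` produce `e+1` permutations with `(exc, neg)` shifted by `(0,0)`, `m-e` by `(1,0)`, `e` by
`(-1,1)` and `m+1-e` by `(0,1)`, which is the recursion read backwards.
-/

open Equiv

theorem Fintype.sum_ite_eq_card_mul_add {α R : Type*} [Fintype α] [CommRing R] (P : α → Prop)
    [DecidablePred P] (a b : R) :
    ∑ x, (if P x then a else b) = #{x | P x} * a + (Fintype.card α - #{x | P x}) * b := by
  rw [Finset.sum_ite, Finset.sum_const, Finset.sum_const, nsmul_eq_mul, nsmul_eq_mul,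
    ← Finset.card_univ, ← Finset.card_filter_add_card_filter_not (s := Finset.univ) P]
  push_cast
  ring

open Fin.NatCast in
theorem ColoredPerm.apply_eq {r n : ℕ} [NeZero r] (π : ColoredPerm r n) (i : Fin n) (c : Fin r) :
    π.1 (i, c) = ((π.1 (i, 0)).1, (π.1 (i, 0)).2 + c) := by
  suffices h : ∀ t : ℕ, π.1 (i, (t : Fin r)) = ((π.1 (i, 0)).1, (π.1 (i, 0)).2 + t) by
    simpa using h c.val
  intro t
  induction t with
  | zero => simp
  | succ t ih => rw [Nat.cast_succ, π.2 (i, t), ih, add_assoc]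

/-- `(σ, s)` is the window notation of the colored permutation `i ↦ (σ i)^[s i]`. -/
abbrev Window (r n : ℕ) := Perm (Fin n) × (Fin n → Fin r)

namespace Window

variable {r n m : ℕ}

def colorSum (p : Window r n) : ℕ := ∑ i, (p.2 i).val

section

variable [NeZero r]

def exc (p : Window r n) : ℕ := #{i | p.2 i = 0 ∧ i < p.1 i}

def toColoredPerm (p : Window r n) : ColoredPerm r n :=
  ⟨{ toFun := fun x => (p.1 x.1, x.2 + p.2 x.1)
     invFun := fun y => (p.1.symm y.1, y.2 - p.2 (p.1.symm y.1))
     left_inv := fun x => by simp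
     right_inv := fun y => by simp },
   fun x => by simp [add_right_comm]⟩

theorem toColoredPerm_injective : Function.Injective (toColoredPerm (r := r) (n := n)) := by
  rintro ⟨σ, s⟩ ⟨σ', s'⟩ h
  have h0 (i : Fin n) : (σ i, 0 + s i) = (σ' i, 0 + s' i) :=
    DFunLike.congr_fun (congrArg Subtype.val h) (i, 0)
  simp only [zero_add, Prod.mk.injEq] at h0
  exact Prod.ext (Equiv.ext fun i => (h0 i).1) (funext fun i => (h0 i).2)

theorem toColoredPerm_surjective : Function.Surjective (toColoredPerm (r := r) (n := n)) := by
  intro π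
  have hσ : Function.LeftInverse (fun v => (π.1.symm (v, 0)).1) (fun i => (π.1 (i, 0)).1) := by
    intro i
    have : π.1 (i, -(π.1 (i, 0)).2) = ((π.1 (i, 0)).1, 0) := by
      rw [ColoredPerm.apply_eq]; simp
    simp [← this]
  have hσ' : Function.RightInverse (fun v => (π.1.symm (v, 0)).1) (fun i => (π.1 (i, 0)).1) := by
    intro v
    have := ColoredPerm.apply_eq π (π.1.symm (v, 0)).1 (π.1.symm (v, 0)).2
    simp only [Prod.mk.eta, Equiv.apply_symm_apply] at this
    exact (congrArg Prod.fst this).symm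
  refine ⟨(⟨_, _, hσ, hσ'⟩, fun i => (π.1 (i, 0)).2),
    Subtype.ext (Equiv.ext fun x => ?_)⟩
  rw [ColoredPerm.apply_eq π x.1 x.2, add_comm]
  rfl

theorem cExcA_toColoredPerm (p : Window r n) : cExcA (toColoredPerm p) = exc p := by
  classical
  rw [cExcA, exc, Nat.card_eq_fintype_card, Fintype.card_subtype]
  congr 1
  refine Finset.filter_congr fun i _ => ?_
  simp only [toColoredPerm, Equiv.coe_fn_mk, colorLt, zero_add, Fin.not_lt_zero, false_or]
  constructor
  · rintro ⟨-, h0, hlt⟩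
    exact ⟨h0.symm, hlt⟩
  · rintro ⟨h0, hlt⟩
    exact ⟨Nat.lt_of_le_of_lt hlt (p.1 i).isLt, h0.symm, hlt⟩

theorem csum_toColoredPerm (p : Window r n) : csum (toColoredPerm p) = colorSum p := by
  simp [csum, colorSum, toColoredPerm]


theorem toColoredPerm_bijective : Function.Bijective (toColoredPerm (r := r) (n := n)) :=
  ⟨toColoredPerm_injective, toColoredPerm_surjective⟩

end

def liftLast (σ : Perm (Fin m)) : Perm (Fin (m + 1)) :=
  finSuccEquivLast.symm.permCongr σ.optionCongr

@[simp] theorem liftLast_castSucc (σ : Perm (Fin m)) (i : Fin m) :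
    liftLast σ i.castSucc = (σ i).castSucc := by
  simp [liftLast, Equiv.permCongr_apply]

@[simp] theorem liftLast_last (σ : Perm (Fin m)) : liftLast σ (Fin.last m) = Fin.last m := by
  simp [liftLast, Equiv.permCongr_apply]

/-- Put the new largest letter, with color `ε`, at position `j`, and move the letter that stood
there to the new last position. -/
def insertMax (p : Window r m) (j : Fin (m + 1)) (ε : Fin r) : Window r (m + 1) :=
  (liftLast p.1 * swap j (Fin.last m), Fin.snoc p.2 ε ∘ swap j (Fin.last m))

theorem insertMax_uncurry_bijective :
    Function.Bijective fun q : Window r m × Fin (m + 1) × Fin r => insertMax q.1 q.2.1 q.2.2 := by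
  rw [Fintype.bijective_iff_injective_and_card]
  refine ⟨?_, by simp [Fintype.card_perm, Nat.factorial_succ]; ring⟩
  rintro ⟨⟨σ, s⟩, j, ε⟩ ⟨⟨σ', s'⟩, j', ε'⟩ h
  obtain ⟨hperm, hcolor⟩ := Prod.mk.inj h
  have hj : j = j' := by
    refine (liftLast σ' * swap j' (Fin.last m)).injective ?_
    simp [← DFunLike.congr_fun hperm j]
  subst hj
  have hσ : σ = σ' := by
    ext i
    simpa using congrArg Fin.val (DFunLike.congr_fun (mul_right_cancel hperm) i.castSucc)
  have hsnoc : (Fin.snoc s ε : Fin (m + 1) → Fin r) = Fin.snoc s' ε' := by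
    funext x
    simpa using congrFun hcolor (swap j (Fin.last m) x)
  obtain ⟨hs, hε⟩ := Fin.snoc_injective2 hsnoc
  simp [hσ, hs, hε]

theorem colorSum_insertMax (p : Window r m) (j : Fin (m + 1)) (ε : Fin r) :
    colorSum (insertMax p j ε) = colorSum p + ε.val := by
  simp only [colorSum, insertMax, Function.comp_apply]
  rw [Equiv.sum_comp (swap j (Fin.last m))
      fun x => ((Fin.snoc p.2 ε : Fin (m + 1) → Fin r) x).val,
    Fin.sum_univ_castSucc]
  simp

section

variable [NeZero r]

theorem exc_eq_sum_castSucc (q : Window r (m + 1)) :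
    exc q = ∑ i : Fin m, if q.2 i.castSucc = 0 ∧ i.castSucc < q.1 i.castSucc then 1 else 0 := by
  rw [exc, Finset.card_filter, Fin.sum_univ_castSucc]
  simp [(Fin.le_last _).not_gt]

theorem exc_insertMax_last (p : Window r m) (ε : Fin r) :
    exc (insertMax p (Fin.last m) ε) = exc p := by
  rw [exc_eq_sum_castSucc, exc, Finset.card_filter]
  simp [insertMax, Fin.castSucc_lt_castSucc_iff]

theorem exc_insertMax_castSucc (p : Window r m) (j : Fin m) (ε : Fin r) :
    exc (insertMax p j.castSucc ε) + (if p.2 j = 0 ∧ j < p.1 j then 1 else 0) =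
      exc p + if ε = 0 then 1 else 0 := by
  have hterm (i : Fin m) :
      (if (insertMax p j.castSucc ε).2 i.castSucc = 0 ∧
          i.castSucc < (insertMax p j.castSucc ε).1 i.castSucc then 1 else 0) =
        Function.update (fun i => if p.2 i = 0 ∧ i < p.1 i then 1 else 0) j
          (if ε = 0 then 1 else 0) i := by
    rw [Function.update_apply]
    by_cases hij : i = j
    · subst hij
      simp [insertMax, Fin.castSucc_lt_last]
    · have hne : i.castSucc ≠ j.castSucc := Fin.castSucc_injective _ |>.ne hij
      simp [insertMax, hij, swap_apply_of_ne_of_ne hne (Fin.castSucc_ne_last i),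
        Fin.castSucc_lt_castSucc_iff]
  rw [exc_eq_sum_castSucc, Finset.sum_congr rfl fun i _ => hterm i, exc, Finset.card_filter,
    Finset.sum_update_of_mem (Finset.mem_univ j),
    Finset.sum_eq_add_sum_sdiff_singleton_of_mem (Finset.mem_univ j)]
  ring

theorem sum_insertMax_positions (g : ℤ → ℤ → ℤ) (p : Window r m) (ε : Fin r) :
    ∑ j, g (exc (insertMax p j ε)) (colorSum (insertMax p j ε)) =
      exc p * g (exc p - 1 + if ε = 0 then 1 else 0) (colorSum p + ε.val) +
        (m - exc p) * g (exc p + if ε = 0 then 1 else 0) (colorSum p + ε.val) +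
          g (exc p) (colorSum p + ε.val) := by
  have hterm (j : Fin m) :
      g (exc (insertMax p j.castSucc ε)) (colorSum (insertMax p j.castSucc ε)) =
      if p.2 j = 0 ∧ j < p.1 j then g (exc p - 1 + if ε = 0 then 1 else 0) (colorSum p + ε.val)
      else g (exc p + if ε = 0 then 1 else 0) (colorSum p + ε.val) := by
    have h := exc_insertMax_castSucc p j ε
    rw [colorSum_insertMax]
    push_cast
    split_ifs at h ⊢ <;> (congr 1; omega)
  rw [Fin.sum_univ_castSucc, exc_insertMax_last, colorSum_insertMax,
    Finset.sum_congr rfl fun j _ => hterm j, Fintype.sum_ite_eq_card_mul_add, Fintype.card_fin]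
  push_cast
  rfl

end

theorem sum_window_two_succ (g : ℤ → ℤ → ℤ) :
    ∑ q : Window 2 (m + 1), g (exc q) (colorSum q) = ∑ p : Window 2 m,
      ((exc p + 1) * g (exc p) (colorSum p) + (m - exc p) * g (exc p + 1) (colorSum p) +
        exc p * g (exc p - 1) (colorSum p + 1) + (m + 1 - exc p) * g (exc p) (colorSum p + 1)) := by
  rw [← insertMax_uncurry_bijective.sum_comp, Fintype.sum_prod_type]
  refine Finset.sum_congr rfl fun p _ => ?_
  rw [Fintype.sum_prod_type, Finset.sum_comm, Fin.sum_univ_two, sum_insertMax_positions,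
    sum_insertMax_positions]
  simp only [↓reduceIte, sub_add_cancel, Fin.coe_ofNat_eq_mod, Nat.zero_mod, CharP.cast_eq_zero,
    add_zero, one_ne_zero, Nat.mod_succ, Nat.cast_one]
  ring

end Window

open Window

theorem cB_eq_sum (n : ℕ) (i k : ℤ) :
    (cB n i k : ℤ) =
      ∑ p : Window 2 n, if (exc p : ℤ) = k ∧ (colorSum p : ℤ) = i then 1 else 0 := by
  let e := Equiv.ofBijective _ (toColoredPerm_bijective (r := 2) (n := n))
  rw [Finset.sum_boole, cB, ← Nat.card_congr (e.subtypeEquiv fun _ => Iff.rfl),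
    Nat.card_eq_fintype_card, Fintype.card_subtype]
  simp only [e, ofBijective_apply, cExcA_toColoredPerm, csum_toColoredPerm]

/-- The recursion
`c_i(n,k) = (n−k)·c_i(n−1,k−1) + (k+1)·c_i(n−1,k) + (n−k)·c_{i−1}(n−1,k) + (k+1)·c_{i−1}(n−1,k+1)`. -/
theorem cB_recursion (n : ℕ) (hn : 1 ≤ n) (i k : ℤ) :
    (cB n i k : ℤ) =
      ((n : ℤ) - k) * cB (n - 1) i (k - 1) + (k + 1) * cB (n - 1) i k +
        ((n : ℤ) - k) * cB (n - 1) (i - 1) k + (k + 1) * cB (n - 1) (i - 1) (k + 1) := by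
  obtain ⟨m, rfl⟩ := Nat.exists_eq_add_of_le' hn
  simp only [cB_eq_sum, Nat.add_sub_cancel]
  rw [sum_window_two_succ fun a b => if a = k ∧ b = i then 1 else 0]
  simp only [Finset.mul_sum, ← Finset.sum_add_distrib]
  refine Finset.sum_congr rfl fun p _ => ?_
  -- on the support of each indicator `exc p` is determined by `k`
  push_cast
  split_ifs <;> omega
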